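/- Define F : ℝ × ℝ → ℝ by F(t, x) = exp( x − (3/2)·cbrt(t²) ). Then for all t ∈ ℝ with t ≠ 0 and all x ∈ ℝ: ∂²F/∂t² (t, x) + (1 / cbrt(t)) · ∂²F/∂t∂x (t, x) + (1 / (3t)) · ∂F/∂t (t, x) = 0. -/

import Mathlib

/-- The real cube root function (the inverse of `x ↦ x³` on `ℝ`). -/
noncomputable def cbrt (x : ℝ) : ℝ := Real.sign x * |x| ^ ((1 : ℝ) / 3)

/-- Partial derivative of `F : ℝ × ℝ → ℝ` in the first (time) variable. -/
noncomputable def pdt (F : ℝ × ℝ → ℝ) (t x : ℝ) : ℝ := deriv (fun s => F (s, x)) t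

/-- Partial derivative of `F` in the second (space) variable. -/
noncomputable def pdx (F : ℝ × ℝ → ℝ) (t x : ℝ) : ℝ := deriv (fun y => F (t, y)) x

/-- Second partial derivative `∂²F/∂t²`. -/
noncomputable def pdtt (F : ℝ × ℝ → ℝ) (t x : ℝ) : ℝ := deriv (fun s => pdt F s x) t

/-- Mixed second partial derivative `∂²F/∂t∂x`. -/
noncomputable def pdtx (F : ℝ × ℝ → ℝ) (t x : ℝ) : ℝ := deriv (fun s => pdx F s x) t

lemma cbrt_sq (t : ℝ) : cbrt (t ^ 2) = (t ^ 2) ^ ((1 : ℝ) / 3) := by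
  rcases eq_or_ne t 0 with h | h
  · simp [cbrt, h, Real.zero_rpow]
  · have h2 : (0:ℝ) < t ^ 2 := by positivity
    simp [cbrt, Real.sign_of_pos h2, abs_of_pos h2]

lemma one_div_cbrt_mul {t : ℝ} (ht : t ≠ 0) :
    (1 / cbrt t) * t = (t ^ 2) ^ ((1 : ℝ) / 3) := by
  have habs : (t ^ 2) ^ ((1 : ℝ) / 3) = |t| ^ ((2 : ℝ) / 3) := by
    rw [← sq_abs, ← Real.rpow_natCast |t| 2, ← Real.rpow_mul (abs_nonneg t)]
    norm_num
  rcases ht.lt_or_gt with h | h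
  · have ha : (0:ℝ) < -t := by linarith
    rw [habs, cbrt, Real.sign_of_neg h, abs_of_neg h]
    rw [show (2:ℝ)/3 = 1 - 1/3 by norm_num, Real.rpow_sub ha, Real.rpow_one]
    have : (-t) ^ ((1:ℝ)/3) ≠ 0 := by positivity
    field_simp
  · rw [habs, cbrt, Real.sign_of_pos h, abs_of_pos h]
    rw [show (2:ℝ)/3 = 1 - 1/3 by norm_num, Real.rpow_sub h, Real.rpow_one]
    have : t ^ ((1:ℝ)/3) ≠ 0 := by positivity
    field_simp

lemma hasDerivAt_sq_rpow (p : ℝ) {s : ℝ} (hs : s ≠ 0) :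
    HasDerivAt (fun u : ℝ => (u ^ 2) ^ p) (p * (s ^ 2) ^ (p - 1) * (2 * s)) s := by
  have h1 : HasDerivAt (fun u : ℝ => u ^ 2) (2 * s) s := by
    simpa using hasDerivAt_pow 2 s
  have h3 := h1.rpow_const (p := p) (Or.inl (pow_ne_zero 2 hs))
  convert h3 using 1
  ring

lemma hasDerivAt_H (x : ℝ) {s : ℝ} (hs : s ≠ 0) :
    HasDerivAt (fun u : ℝ => Real.exp (x - (3 / 2) * (u ^ 2) ^ ((1 : ℝ) / 3)))
      (Real.exp (x - (3 / 2) * (s ^ 2) ^ ((1 : ℝ) / 3)) * (-(s * (s ^ 2) ^ (-(2 : ℝ) / 3)))) s := by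
  have h1 := ((hasDerivAt_sq_rpow ((1:ℝ)/3) hs).const_mul ((3:ℝ)/2)).const_sub x
  have h2 := h1.exp
  convert h2 using 1
  have : (1:ℝ)/3 - 1 = -(2:ℝ)/3 := by norm_num
  rw [this]
  ring

lemma pdt_eq (F : ℝ × ℝ → ℝ)
    (hF : ∀ t x : ℝ, F (t, x) = Real.exp (x - (3 / 2) * cbrt (t ^ 2)))
    {s : ℝ} (hs : s ≠ 0) (x : ℝ) :
    pdt F s x =
      Real.exp (x - (3 / 2) * (s ^ 2) ^ ((1 : ℝ) / 3)) * (-(s * (s ^ 2) ^ (-(2 : ℝ) / 3))) := by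
  have hfun : (fun u => F (u, x)) =
      fun u : ℝ => Real.exp (x - (3 / 2) * (u ^ 2) ^ ((1 : ℝ) / 3)) := by
    funext u; rw [hF, cbrt_sq]
  rw [pdt, hfun, (hasDerivAt_H x hs).deriv]

lemma pdx_eq (F : ℝ × ℝ → ℝ)
    (hF : ∀ t x : ℝ, F (t, x) = Real.exp (x - (3 / 2) * cbrt (t ^ 2)))
    (s x : ℝ) : pdx F s x = F (s, x) := by
  have hfun : (fun y => F (s, y)) =
      fun y : ℝ => Real.exp (y - (3 / 2) * cbrt (s ^ 2)) := by
    funext y; rw [hF]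
  have h : HasDerivAt (fun y : ℝ => Real.exp (y - (3 / 2) * cbrt (s ^ 2)))
      (Real.exp (x - (3 / 2) * cbrt (s ^ 2)) * 1) x :=
    ((hasDerivAt_id x).sub_const _).exp
  rw [pdx, hfun, h.deriv, mul_one, hF]

/-- verification behind Example 4.1. -/
theorem stmt_6 (F : ℝ × ℝ → ℝ)
    (hF : ∀ t x : ℝ, F (t, x) = Real.exp (x - (3 / 2) * cbrt (t ^ 2))) :
    ∀ t : ℝ, t ≠ 0 → ∀ x : ℝ,
      pdtt F t x + (1 / cbrt t) * pdtx F t x + (1 / (3 * t)) * pdt F t x = 0 := by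
  intro t ht x
  have ht2 : (0:ℝ) < t ^ 2 := by positivity
  set u : ℝ := (t ^ 2) ^ ((1 : ℝ) / 3) with hu_def
  have hu : 0 < u := Real.rpow_pos_of_pos ht2 _
  have key : ∀ (p : ℝ) (n : ℕ), p + (1/3) * (n : ℝ) = 0 → (t ^ 2) ^ p = 1 / u ^ n := by
    intro p n hpn
    have h1 : u ^ n = (t ^ 2) ^ ((1/3 : ℝ) * (n : ℝ)) := by
      rw [hu_def, ← Real.rpow_natCast ((t ^ 2) ^ ((1:ℝ)/3)) n, ← Real.rpow_mul ht2.le]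
    rw [h1, eq_div_iff (by positivity), ← Real.rpow_add ht2, hpn, Real.rpow_zero]
  have hB : (t ^ 2) ^ (-(2 : ℝ) / 3) = 1 / u ^ 2 := by
    apply key; push_cast; ring
  have hB5 : (t ^ 2) ^ (-(2 : ℝ) / 3 - 1) = 1 / u ^ 5 := by
    apply key; push_cast; ring
  have hu3 : u ^ 3 = t ^ 2 := by
    have h := key (-1 : ℝ) 3 (by push_cast; ring)
    rw [Real.rpow_neg_one] at h
    field_simp at h
    linarith
  -- pdtx = pdt
  have hpdtx : pdtx F t x = pdt F t x := by
    rw [pdtx, pdt]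
    congr 1
    funext s
    rw [pdx_eq F hF]
  -- value of pdt
  set E : ℝ := Real.exp (x - (3 / 2) * u) with hE_def
  have hpdt : pdt F t x = E * (-(t * (1 / u ^ 2))) := by
    rw [pdt_eq F hF ht, hB]
  -- pdtt
  have hq : HasDerivAt (fun s : ℝ => -(s * (s ^ 2) ^ (-(2 : ℝ) / 3)))
      (-(1 * (t ^ 2) ^ (-(2 : ℝ) / 3) + t * (-(2 : ℝ) / 3 * (t ^ 2) ^ (-(2 : ℝ) / 3 - 1) * (2 * t)))) t :=
    ((hasDerivAt_id t).mul (hasDerivAt_sq_rpow (-(2:ℝ)/3) ht)).neg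
  have hG : HasDerivAt (fun s : ℝ => Real.exp (x - (3 / 2) * (s ^ 2) ^ ((1 : ℝ) / 3)) *
      (-(s * (s ^ 2) ^ (-(2 : ℝ) / 3)))) _ t := (hasDerivAt_H x ht).mul hq
  have hpdtt : pdtt F t x =
      E * (-(t * (1 / u ^ 2))) * (-(t * (1 / u ^ 2)))
        + E * (-(1 * (1 / u ^ 2) + t * (-(2 : ℝ) / 3 * (1 / u ^ 5) * (2 * t)))) := by
    have hev : (fun s => pdt F s x) =ᶠ[nhds t]
        (fun s => Real.exp (x - (3 / 2) * (s ^ 2) ^ ((1 : ℝ) / 3)) *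
          (-(s * (s ^ 2) ^ (-(2 : ℝ) / 3)))) := by
      filter_upwards [eventually_ne_nhds ht] with s hs
      exact pdt_eq F hF hs x
    rw [pdtt, hev.deriv_eq, hG.deriv, hB, hB5]
  have hc : 1 / cbrt t = u / t := by
    rw [eq_div_iff ht]
    exact one_div_cbrt_mul ht
  rw [hpdtt, hpdtx, hpdt, hc]
  have hune : u ≠ 0 := ne_of_gt hu
  field_simp
  linear_combination (-4*E - 3*E*u) * hu3
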